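/- Let m be an odd positive integer such that q = 2m² − 1 is a prime power, let C := C_0^{(2,q)} be the set of nonzero squares of F_q, and let N := F_q∖(C∪{0}) be the set of nonsquares of F_q. Suppose b ∈ {0, 1} and D₀, D₁ ⊆ F_q satisfy b + |D₀| + |D₁| = 2m² − m, |D₁| ∈ {m²−m, m²}, and for every j ∈ F_q: |D₀ ∩ ((C∪{0}) + j)| + |D₁ ∩ (C + j)| ∈ {m²−m, m²} and b + |D₀ ∩ (C + j)| + |D₁ ∩ (N + j)| ∈ {m²−m, m²}. Then there exists an Hadamard matrix of order 4m² all of whose row sums equal 2m (a regular Hadamard matrix). -/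

import Mathlib

/-!
For `q ≡ 1 (mod 4)` the quadratic character `χ` of `F_q`, bordered by a row and a column of ones
(indexed by `none`, the point at infinity), is a symmetric conference matrix `A`; Paley's second
construction `A ⊗ [[1, 1], [1, -1]] + I ⊗ [[1, -1], [-1, -1]]` is then a Hadamard matrix of order
`2 (q + 1) = 4 m²`. Negating the columns indexed by `D₀ × {0}` and `D₁ × {1}` (and the column
`(∞, 1)` when `b = 0`) keeps it Hadamard. Since `2 · 1_C(y) = 1 + χ(y) - [y = 0]`, the number of
points of `D` in a translate `C + j` is an affine function of the character sum
`∑_{x ∈ D} χ(x - j)`, and the hypotheses on `b`, `D₀`, `D₁` say exactly that every row sum of the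
new matrix is `±2m`. Negating the rows with sum `-2m` makes the matrix regular.
-/

open Finset Matrix
open scoped Kronecker

namespace Matrix.IsHadamard

variable {n R : Type*} [Fintype n] [DecidableEq n] [CommRing R] [StarRing R] {A : Matrix n n R}

theorem mul_diagonal (hA : A.IsHadamard) {d : n → R} (hd : ∀ i, d i ∈ unitary R) :
    (A * diagonal d).IsHadamard := by
  have hdd : diagonal d * (diagonal d)ᴴ = 1 := by
    rw [diagonal_conjTranspose, diagonal_mul_diagonal, ← diagonal_one]
    exact congrArg diagonal (funext fun i => Unitary.mul_star_self_of_mem (hd i))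
  have hdd' : (diagonal d)ᴴ * diagonal d = 1 := by
    rw [diagonal_conjTranspose, diagonal_mul_diagonal, ← diagonal_one]
    exact congrArg diagonal (funext fun i => Unitary.star_mul_self_of_mem (hd i))
  refine ⟨fun i j => ?_, ?_, ?_⟩
  · rw [Matrix.mul_diagonal]
    exact mul_mem (hA.apply_mem i j) (hd j)
  · rw [Matrix.conjTranspose_mul, Matrix.mul_assoc, ← Matrix.mul_assoc (diagonal d), hdd,
      Matrix.one_mul, hA.mul_conjTranspose]
  · rw [Matrix.conjTranspose_mul, Matrix.mul_assoc, ← Matrix.mul_assoc Aᴴ, hA.conjTranspose_mul,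
      Matrix.smul_mul, Matrix.one_mul, Matrix.mul_smul, hdd']

theorem diagonal_mul (hA : A.IsHadamard) {d : n → R} (hd : ∀ i, d i ∈ unitary R) :
    (diagonal d * A).IsHadamard := by
  have := (hA.conjTranspose.mul_diagonal (d := star d) fun i =>
    Unitary.star_mem (hd i)).conjTranspose
  rwa [Matrix.conjTranspose_mul, conjTranspose_conjTranspose, diagonal_conjTranspose,
    star_star] at this

theorem exists_rowSum_eq (hA : A.IsHadamard) {s : R}
    (hrow : ∀ i, ∑ j, A i j = s ∨ ∑ j, A i j = -s) :
    ∃ B : Matrix n n R, B.IsHadamard ∧ ∀ i, ∑ j, B i j = s := by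
  classical
  let d : n → R := fun i => if ∑ j, A i j = s then 1 else -1
  refine ⟨diagonal d * A, hA.diagonal_mul fun i => ?_, fun i => ?_⟩
  · by_cases h : ∑ j, A i j = s <;> simp [d, h, Unitary.mem_iff]
  · simp only [Matrix.diagonal_mul, ← Finset.mul_sum, d]
    split_ifs with h
    · rw [h, one_mul]
    · rw [(hrow i).resolve_left h, neg_one_mul, neg_neg]

theorem exists_fin_of_card_eq {H : Matrix n n ℤ} (hH : H.IsHadamard) {s : ℤ}
    (hrow : ∀ i, ∑ j, H i j = s) {k : ℕ} (hk : Fintype.card n = k) :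
    ∃ H' : Matrix (Fin k) (Fin k) ℤ, (∀ i j, H' i j = 1 ∨ H' i j = -1) ∧
      H' * H'.transpose = (k : ℤ) • (1 : Matrix _ _ ℤ) ∧ ∀ i, ∑ j, H' i j = s := by
  let e := Fintype.equivFinOfCardEq hk
  have hH' := hH.reindex e e
  refine ⟨Matrix.reindex e e H, fun i j =>
    Unitary.mem_iff_eq_one_or_eq_neg_one.mp (hH'.apply_mem i j), ?_, fun i => ?_⟩
  · rw [← conjTranspose_eq_transpose_of_trivial, hH'.mul_conjTranspose, Fintype.card_fin]
  · rw [reindex_apply, ← hrow (e.symm i)]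
    exact e.symm.sum_comp _

end Matrix.IsHadamard

section PaleyII

variable {ι : Type*} [DecidableEq ι]

def paleyII (A : Matrix ι ι ℤ) : Matrix (ι × Fin 2) (ι × Fin 2) ℤ :=
  A ⊗ₖ !![1, 1; 1, -1] + 1 ⊗ₖ !![1, -1; -1, -1]

theorem paleyII_transpose {A : Matrix ι ι ℤ} (hA : Aᵀ = A) : (paleyII A)ᵀ = paleyII A := by
  have hB : !![(1 : ℤ), 1; 1, -1]ᵀ = !![1, 1; 1, -1] := by decide
  have hC : !![(1 : ℤ), -1; -1, -1]ᵀ = !![1, -1; -1, -1] := by decide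
  rw [paleyII, transpose_add, ← kroneckerMap_transpose, ← kroneckerMap_transpose, hA,
    transpose_one, hB, hC]

theorem paleyII_mul_self [Fintype ι] {A : Matrix ι ι ℤ} {k : ℤ} (hAA : A * A = k • 1) :
    paleyII A * paleyII A = (2 * (k + 1)) • 1 := by
  have hBB : !![1, 1; 1, -1] * !![1, 1; 1, -1] = (2 : ℤ) • (1 : Matrix (Fin 2) (Fin 2) ℤ) := by
    decide
  have hCC : !![1, -1; -1, -1] * !![1, -1; -1, -1] = (2 : ℤ) • (1 : Matrix (Fin 2) (Fin 2) ℤ) := by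
    decide
  have hBC : !![1, 1; 1, -1] * !![1, -1; -1, -1] + !![1, -1; -1, -1] * !![1, 1; 1, -1] =
      (0 : Matrix (Fin 2) (Fin 2) ℤ) := by
    decide
  calc paleyII A * paleyII A
      = (A * A) ⊗ₖ (!![1, 1; 1, -1] * !![1, 1; 1, -1])
        + A ⊗ₖ (!![1, 1; 1, -1] * !![1, -1; -1, -1] + !![1, -1; -1, -1] * !![1, 1; 1, -1])
        + (1 * 1 : Matrix ι ι ℤ) ⊗ₖ (!![1, -1; -1, -1] * !![1, -1; -1, -1]) := by
        simp only [paleyII, Matrix.add_mul, Matrix.mul_add, ← mul_kronecker_mul, Matrix.mul_one,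
          Matrix.one_mul, kronecker_add]
        abel
    _ = (2 * (k + 1)) • 1 := by
        rw [hAA, hBB, hBC, hCC, kronecker_zero, add_zero, Matrix.one_mul, smul_kronecker,
          kronecker_smul, one_kronecker_one, smul_smul, ← add_smul]
        ring_nf

theorem isHadamard_paleyII [Fintype ι] {A : Matrix ι ι ℤ} (hdiag : ∀ i, A i i = 0)
    (hoff : ∀ i j, i ≠ j → A i j = 1 ∨ A i j = -1) (hA : Aᵀ = A)
    (hAA : A * A = ((Fintype.card ι : ℤ) - 1) • 1) : (paleyII A).IsHadamard := by
  have hmul : paleyII A * (paleyII A)ᴴ = (Fintype.card (ι × Fin 2) : ℤ) • 1 := by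
    rw [conjTranspose_eq_transpose_of_trivial, paleyII_transpose hA, paleyII_mul_self hAA]
    simp [mul_comm]
  refine ⟨fun p c => ?_, hmul, ?_⟩
  · obtain ⟨i, u⟩ := p
    obtain ⟨j, v⟩ := c
    rw [Unitary.mem_iff_eq_one_or_eq_neg_one]
    by_cases hij : i = j
    · subst hij
      fin_cases u <;> fin_cases v <;> simp [paleyII, hdiag]
    · rcases hoff i j hij with h | h <;>
        fin_cases u <;> fin_cases v <;> simp [paleyII, h, hij]
  · rwa [conjTranspose_eq_transpose_of_trivial, paleyII_transpose hA] at hmul ⊢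

theorem paleyII_mulVec_apply_zero [Fintype ι] (A : Matrix ι ι ℤ) (w₀ w₁ : ι → ℤ) (i : ι) :
    (paleyII A *ᵥ fun c => ![w₀, w₁] c.2 c.1) (i, 0) =
      (A *ᵥ w₀) i + (A *ᵥ w₁) i + w₀ i - w₁ i := by
  simp only [mulVec, dotProduct, paleyII, Int.reduceNeg, Fin.isValue, Matrix.add_apply,
    kroneckerMap_apply, of_apply, cons_val', cons_val_fin_one, cons_val_zero, one_apply, ite_mul,
    one_mul, zero_mul, Nat.succ_eq_add_one, Nat.reduceAdd, add_mul, sum_add_distrib,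
    Fintype.sum_prod_type, Fin.sum_univ_two, mul_one, cons_val_one, sum_ite_irrel, neg_mul,
    sum_const_zero, sum_ite_eq, mem_univ, ↓reduceIte]
  ring

theorem paleyII_mulVec_apply_one [Fintype ι] (A : Matrix ι ι ℤ) (w₀ w₁ : ι → ℤ) (i : ι) :
    (paleyII A *ᵥ fun c => ![w₀, w₁] c.2 c.1) (i, 1) =
      (A *ᵥ w₀) i - (A *ᵥ w₁) i - w₀ i - w₁ i := by
  simp only [mulVec, dotProduct, paleyII, Int.reduceNeg, Fin.isValue, Matrix.add_apply,
    kroneckerMap_apply, of_apply, cons_val', cons_val_fin_one, cons_val_one, one_apply, ite_mul,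
    one_mul, zero_mul, Nat.succ_eq_add_one, Nat.reduceAdd, add_mul, sum_add_distrib,
    Fintype.sum_prod_type, Fin.sum_univ_two, cons_val_zero, mul_one, mul_neg, neg_mul,
    sum_neg_distrib, sum_ite_irrel, sum_const_zero, sum_ite_eq, mem_univ, ↓reduceIte]
  ring

end PaleyII

theorem ringChar_ne_two_of_card_mod_four {F : Type*} [Field F] [Fintype F]
    (hq : Fintype.card F % 4 = 1) : ringChar F ≠ 2 := by
  rw [Ne, FiniteField.even_card_iff_char_two]
  omega

section Paley

variable {F : Type*} [Field F] [Fintype F] [DecidableEq F]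

theorem quadraticChar_sum_sub (hF : ringChar F ≠ 2) (a : F) :
    ∑ x, quadraticChar F (x - a) = 0 :=
  ((Equiv.subRight a).sum_comp (quadraticChar F)).trans (quadraticChar_sum_zero hF)

theorem quadraticChar_sum_mul_self_sub (a : F) :
    ∑ x, quadraticChar F (x - a) * quadraticChar F (x - a) = Fintype.card F - 1 := by
  have h : ∀ y : F, quadraticChar F y * quadraticChar F y = 1 - if y = 0 then 1 else 0 := by
    intro y
    by_cases hy : y = 0
    · simp [hy]
    · rw [← sq, quadraticChar_sq_one hy, if_neg hy, sub_zero]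
  refine ((Equiv.subRight a).sum_comp fun y => quadraticChar F y * quadraticChar F y).trans ?_
  simp only [h, Finset.sum_sub_distrib, Finset.sum_ite_eq', Finset.mem_univ, if_true,
    Finset.sum_const, Finset.card_univ, nsmul_eq_mul, mul_one]

theorem quadraticChar_sum_mul_sub (hF : ringChar F ≠ 2) {a b : F} (hab : a ≠ b) :
    ∑ x, quadraticChar F (x - a) * quadraticChar F (x - b) = -1 := by
  have hd : b - a ≠ 0 := sub_ne_zero.mpr hab.symm
  have hJ : jacobiSum (quadraticChar F) (quadraticChar F) = -quadraticChar F (-1) := by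
    simpa [(quadraticChar_isQuadratic F).inv] using
      jacobiSum_nontrivial_inv (quadraticChar_ne_one hF)
  -- `x = a + (b - a) y` turns the sum into `χ(-1) J(χ, χ)`, and `J(χ, χ) = J(χ, χ⁻¹) = -χ(-1)`.
  let e : F ≃ F := (Equiv.mulLeft₀ (b - a) hd).trans (Equiv.addRight a)
  calc ∑ x, quadraticChar F (x - a) * quadraticChar F (x - b)
      = ∑ y, quadraticChar F (-1) * quadraticChar F (b - a) ^ 2 *
          (quadraticChar F y * quadraticChar F (1 - y)) := by
        rw [← Equiv.sum_comp e]
        refine Finset.sum_congr rfl fun y _ => ?_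
        have h₁ : e y - a = (b - a) * y := by simp [e]
        have h₂ : e y - b = -1 * (b - a) * (1 - y) := by simp [e]; ring
        rw [h₁, h₂, map_mul, map_mul, map_mul]
        ring
    _ = -1 := by
        rw [← Finset.mul_sum, ← jacobiSum.eq_1, hJ, quadraticChar_sq_one hd, mul_one, mul_neg,
          ← sq, quadraticChar_sq_one (neg_ne_zero.mpr one_ne_zero)]

def charSum (D : Finset F) (j : F) : ℤ := ∑ x ∈ D, quadraticChar F (x - j)

variable (F) in
def paleyMatrix : Matrix (Option F) (Option F) ℤ
  | none, none => 0
  | none, some _ => 1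
  | some _, none => 1
  | some i, some j => quadraticChar F (j - i)

theorem paleyMatrix_apply_self (i : Option F) : paleyMatrix F i i = 0 := by
  cases i <;> simp [paleyMatrix]

theorem paleyMatrix_apply_of_ne {i j : Option F} (hij : i ≠ j) :
    paleyMatrix F i j = 1 ∨ paleyMatrix F i j = -1 := by
  match i, j with
  | none, none => exact absurd rfl hij
  | none, some _ | some _, none => exact Or.inl rfl
  | some i, some j => exact quadraticChar_dichotomy (sub_ne_zero.mpr fun h => hij (by rw [h]))

theorem paleyMatrix_transpose (hF : quadraticChar F (-1) = 1) :
    (paleyMatrix F)ᵀ = paleyMatrix F := by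
  ext (_ | i) (_ | j)
  · rfl
  · rfl
  · rfl
  · change quadraticChar F (i - j) = quadraticChar F (j - i)
    rw [← neg_sub, ← neg_one_mul, map_mul, hF, one_mul]

theorem paleyMatrix_mul_transpose (hF : ringChar F ≠ 2) :
    paleyMatrix F * (paleyMatrix F)ᵀ = (Fintype.card F : ℤ) • 1 := by
  ext (_ | i) (_ | j)
  all_goals simp only [mul_apply, paleyMatrix, transpose_apply, Fintype.sum_option, mul_zero,
    mul_one, one_mul, zero_add, sum_const, card_univ, Int.nsmul_eq_mul, Matrix.smul_apply,
    one_apply, reduceCtorEq, Option.some.injEq, ↓reduceIte, Int.zsmul_eq_mul, mul_ite]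
  · exact quadraticChar_sum_sub hF j
  · exact quadraticChar_sum_sub hF i
  · split_ifs with hij
    · subst hij
      rw [quadraticChar_sum_mul_self_sub]
      ring
    · rw [quadraticChar_sum_mul_sub hF hij]
      ring

end Paley

section Signs

variable {F : Type*} [DecidableEq F]

def signVec (s : ℤ) (D : Finset F) : Option F → ℤ
  | none => s
  | some x => if x ∈ D then -1 else 1

theorem signVec_none (s : ℤ) (D : Finset F) : signVec s D none = s := rfl

theorem signVec_some (s : ℤ) (D : Finset F) (x : F) :
    signVec s D (some x) = 1 - 2 * if x ∈ D then 1 else 0 := by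
  by_cases hx : x ∈ D <;> simp [signVec, hx]

def columnSigns (b : ℤ) (D₀ D₁ : Finset F) : Option F × Fin 2 → ℤ :=
  fun c => ![signVec 1 D₀, signVec (2 * b - 1) D₁] c.2 c.1

theorem columnSigns_mem_unitary {b : ℤ} (hb : b = 0 ∨ b = 1) (D₀ D₁ : Finset F)
    (c : Option F × Fin 2) : columnSigns b D₀ D₁ c ∈ unitary ℤ := by
  rw [Unitary.mem_iff_eq_one_or_eq_neg_one]
  obtain ⟨_ | x, v⟩ := c <;> fin_cases v <;> rcases hb with rfl | rfl <;>
    simp [columnSigns, signVec] <;> tauto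

variable [Field F] [Fintype F]

theorem paleyMatrix_mulVec_signVec_none (s : ℤ) (D : Finset F) :
    (paleyMatrix F *ᵥ signVec s D) none = Fintype.card F - 2 * #D := by
  simp only [mulVec, dotProduct, paleyMatrix, Fintype.sum_option, zero_mul, signVec_some, one_mul,
    mul_ite, mul_one, mul_zero, sum_sub_distrib, sum_const, card_univ, Int.nsmul_eq_mul,
    sum_ite_mem, univ_inter, zero_add]
  ring

theorem paleyMatrix_mulVec_signVec_some (hF : ringChar F ≠ 2) (s : ℤ) (D : Finset F) (j : F) :
    (paleyMatrix F *ᵥ signVec s D) (some j) = s - 2 * charSum D j := by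
  have h : ∀ x, quadraticChar F (x - j) * signVec s D (some x) =
      quadraticChar F (x - j) - 2 * if x ∈ D then quadraticChar F (x - j) else 0 := by
    intro x
    by_cases hx : x ∈ D <;> simp only [signVec, hx, if_true, if_false] <;> ring
  simp only [mulVec, dotProduct, Fintype.sum_option, paleyMatrix, h, Finset.sum_sub_distrib,
    quadraticChar_sum_sub hF, ← Finset.mul_sum, Finset.sum_ite_mem, Finset.univ_inter, charSum]
  simp [signVec_none, sub_eq_add_neg]

end Signs

theorem natCast_eq_or_of_mem_pair {m n : ℕ} (h : n ∈ ({m ^ 2 - m, m ^ 2} : Set ℕ)) :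
    (n : ℤ) = m ^ 2 - m ∨ (n : ℤ) = m ^ 2 := by
  rcases h with rfl | rfl
  · left
    rw [Nat.cast_sub (Nat.le_self_pow two_ne_zero m)]
    push_cast
    ring
  · right
    push_cast
    ring

section Counting

variable {F : Type*} [Field F] [Fintype F] [DecidableEq F]

theorem two_mul_ncard_inter_image_add (D : Finset F) {W : Set F} {s t : ℤ}
    (hW : ∀ y, 2 * W.indicator 1 y = 1 + s * quadraticChar F y + t * if y = 0 then 1 else 0)
    (j : F) :
    2 * (((D : Set F) ∩ (fun x => x + j) '' W).ncard : ℤ) =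
      #D + s * charSum D j + t * if j ∈ D then 1 else 0 := by
  classical
  have hset : (D : Set F) ∩ (fun x => x + j) '' W = ↑{x ∈ D | x - j ∈ W} := by
    ext x
    simp [Set.image_add_right, sub_eq_add_neg]
  have hpt : ∀ x ∈ D, 2 * ((if x - j ∈ W then 1 else 0 : ℕ) : ℤ) =
      1 + s * quadraticChar F (x - j) + t * if x = j then 1 else 0 := fun x _ => by
    have h := hW (x - j)
    simp only [sub_eq_zero] at h
    rw [← h, Set.indicator_apply]
    split_ifs <;> simp
  rw [hset, Set.ncard_coe_finset, card_filter, Nat.cast_sum, Finset.mul_sum,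
    Finset.sum_congr rfl hpt]
  simp [Finset.sum_add_distrib, charSum, Finset.mul_sum, -quadraticChar_apply]

theorem two_mul_indicator_nonzero_isSquare (y : F) :
    2 * {x : F | x ≠ 0 ∧ IsSquare x}.indicator 1 y =
      1 + 1 * quadraticChar F y + -1 * if y = 0 then 1 else 0 := by
  rcases eq_or_ne y 0 with rfl | hy
  · simp
  by_cases hsq : IsSquare y
  · simp [hy, hsq, (quadraticChar_one_iff_isSquare hy).mpr hsq]
  · simp [hy, hsq, quadraticChar_neg_one_iff_not_isSquare.mpr hsq]

theorem two_mul_indicator_nonzero_isSquare_union_zero (y : F) :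
    2 * ({x : F | x ≠ 0 ∧ IsSquare x} ∪ {0}).indicator 1 y =
      1 + 1 * quadraticChar F y + 1 * if y = 0 then 1 else 0 := by
  rcases eq_or_ne y 0 with rfl | hy
  · simp
  by_cases hsq : IsSquare y
  · simp [hy, hsq, (quadraticChar_one_iff_isSquare hy).mpr hsq]
  · simp [hy, hsq, quadraticChar_neg_one_iff_not_isSquare.mpr hsq]

theorem two_mul_indicator_not_isSquare (y : F) :
    2 * (Set.univ \ ({x : F | x ≠ 0 ∧ IsSquare x} ∪ {0})).indicator 1 y =
      1 + -1 * quadraticChar F y + -1 * if y = 0 then 1 else 0 := by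
  rcases eq_or_ne y 0 with rfl | hy
  · simp
  by_cases hsq : IsSquare y
  · simp [hy, hsq, (quadraticChar_one_iff_isSquare hy).mpr hsq]
  · simp [hy, hsq, quadraticChar_neg_one_iff_not_isSquare.mpr hsq]

theorem charSum_add_charSum_eq_or {m b : ℕ} {D₀ D₁ : Finset F}
    (hsize : (b : ℤ) + #D₀ + #D₁ = 2 * m ^ 2 - m) {j : F}
    (h : ((D₀ : Set F) ∩ (fun x => x + j) '' ({x | x ≠ 0 ∧ IsSquare x} ∪ {0})).ncard +
      ((D₁ : Set F) ∩ (fun x => x + j) '' {x | x ≠ 0 ∧ IsSquare x}).ncard ∈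
        ({m ^ 2 - m, m ^ 2} : Set ℕ)) :
    charSum D₀ j + charSum D₁ j + (if j ∈ D₀ then 1 else 0) - (if j ∈ D₁ then 1 else 0) =
      b - m ∨ charSum D₀ j + charSum D₁ j + (if j ∈ D₀ then 1 else 0) -
      (if j ∈ D₁ then 1 else 0) = b + m := by
  have h₀ := two_mul_ncard_inter_image_add D₀ two_mul_indicator_nonzero_isSquare_union_zero j
  have h₁ := two_mul_ncard_inter_image_add D₁ two_mul_indicator_nonzero_isSquare j
  rcases natCast_eq_or_of_mem_pair h with h | h <;> push_cast at h <;> [left; right] <;> linarith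

theorem charSum_sub_charSum_eq_or {m b : ℕ} {D₀ D₁ : Finset F}
    (hsize : (b : ℤ) + #D₀ + #D₁ = 2 * m ^ 2 - m) {j : F}
    (h : b + ((D₀ : Set F) ∩ (fun x => x + j) '' {x | x ≠ 0 ∧ IsSquare x}).ncard +
      ((D₁ : Set F) ∩ (fun x => x + j) ''
        (Set.univ \ ({x | x ≠ 0 ∧ IsSquare x} ∪ {0}))).ncard ∈ ({m ^ 2 - m, m ^ 2} : Set ℕ)) :
    charSum D₀ j - charSum D₁ j - (if j ∈ D₀ then 1 else 0) - (if j ∈ D₁ then 1 else 0) =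
      -b - m ∨ charSum D₀ j - charSum D₁ j - (if j ∈ D₀ then 1 else 0) -
      (if j ∈ D₁ then 1 else 0) = -b + m := by
  have h₀ := two_mul_ncard_inter_image_add D₀ two_mul_indicator_nonzero_isSquare j
  have h₁ := two_mul_ncard_inter_image_add D₁ two_mul_indicator_not_isSquare j
  rcases natCast_eq_or_of_mem_pair h with h | h <;> push_cast at h <;> [left; right] <;> linarith

end Counting

section Construction

variable {F : Type*} [Field F] [Fintype F] [DecidableEq F]

theorem isHadamard_paleyII_paleyMatrix (hq : Fintype.card F % 4 = 1) :
    (paleyII (paleyMatrix F)).IsHadamard := by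
  have hF := ringChar_ne_two_of_card_mod_four hq
  have hF' : quadraticChar F (-1) = 1 :=
    (quadraticChar_neg_one hF).trans (ZMod.χ₄_nat_one_mod_four hq)
  refine isHadamard_paleyII paleyMatrix_apply_self (fun _ _ => paleyMatrix_apply_of_ne)
    (paleyMatrix_transpose hF') ?_
  nth_rw 2 [← paleyMatrix_transpose hF']
  rw [paleyMatrix_mul_transpose hF]
  simp

theorem paleyII_mulVec_columnSigns_eq_or (hF : ringChar F ≠ 2) {m b : ℤ} {D₀ D₁ : Finset F}
    (hq : (Fintype.card F : ℤ) = 2 * m ^ 2 - 1) (hsize : b + #D₀ + #D₁ = 2 * m ^ 2 - m)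
    (hD₁ : (#D₁ : ℤ) = m ^ 2 - m ∨ (#D₁ : ℤ) = m ^ 2)
    (h₁ : ∀ j, charSum D₀ j + charSum D₁ j + (if j ∈ D₀ then 1 else 0) -
      (if j ∈ D₁ then 1 else 0) = b - m ∨ charSum D₀ j + charSum D₁ j +
      (if j ∈ D₀ then 1 else 0) - (if j ∈ D₁ then 1 else 0) = b + m)
    (h₂ : ∀ j, charSum D₀ j - charSum D₁ j - (if j ∈ D₀ then 1 else 0) -
      (if j ∈ D₁ then 1 else 0) = -b - m ∨ charSum D₀ j - charSum D₁ j -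
      (if j ∈ D₀ then 1 else 0) - (if j ∈ D₁ then 1 else 0) = -b + m)
    (p : Option F × Fin 2) :
    (paleyII (paleyMatrix F) *ᵥ columnSigns b D₀ D₁) p = 2 * m ∨
      (paleyII (paleyMatrix F) *ᵥ columnSigns b D₀ D₁) p = -(2 * m) := by
  obtain ⟨_ | j, u⟩ := p <;> revert u <;> refine Fin.forall_fin_two.mpr ⟨?_, ?_⟩ <;>
    unfold columnSigns <;>
    simp only [paleyII_mulVec_apply_zero, paleyII_mulVec_apply_one,
      paleyMatrix_mulVec_signVec_none, paleyMatrix_mulVec_signVec_some hF, signVec_none,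
      signVec_some]
  · left; linarith
  · rcases hD₁ with h | h
    · right; linarith
    · left; linarith
  · rcases h₁ j with h | h
    · left; linarith
    · right; linarith
  · rcases h₂ j with h | h
    · left; linarith
    · right; linarith

end Construction

theorem stmt_17_general (m : ℕ) (hmodd : Odd m)
    (F : Type) [Field F] [Fintype F] (hF : Fintype.card F = 2 * m ^ 2 - 1)
    (C : Set F) (hC : C = {x : F | x ≠ 0 ∧ IsSquare x})
    (N : Set F) (hN : N = Set.univ \ (C ∪ {0}))
    (b : ℕ) (hb : b = 0 ∨ b = 1)
    (D₀ D₁ : Set F)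
    (hsize : b + D₀.ncard + D₁.ncard = 2 * m ^ 2 - m)
    (hD₁ : D₁.ncard ∈ ({m ^ 2 - m, m ^ 2} : Set ℕ))
    (hint1 : ∀ j : F,
      (D₀ ∩ ((fun x => x + j) '' (C ∪ {0}))).ncard + (D₁ ∩ ((fun x => x + j) '' C)).ncard ∈
        ({m ^ 2 - m, m ^ 2} : Set ℕ))
    (hint2 : ∀ j : F,
      b + (D₀ ∩ ((fun x => x + j) '' C)).ncard + (D₁ ∩ ((fun x => x + j) '' N)).ncard ∈
        ({m ^ 2 - m, m ^ 2} : Set ℕ)) :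
    ∃ H : Matrix (Fin (4 * m ^ 2)) (Fin (4 * m ^ 2)) ℤ,
      (∀ i j, H i j = 1 ∨ H i j = -1) ∧
      H * H.transpose = ((4 * m ^ 2 : ℕ) : ℤ) • (1 : Matrix _ _ ℤ) ∧
      (∀ i, (∑ j, H i j) = 2 * (m : ℤ)) := by
  classical
  subst hC hN
  lift D₀ to Finset F using D₀.toFinite
  lift D₁ to Finset F using D₁.toFinite
  simp only [Set.ncard_coe_finset] at hsize hD₁
  have hq4 : Fintype.card F % 4 = 1 := by
    obtain ⟨k, rfl⟩ := hmodd
    rw [hF, show (2 * k + 1) ^ 2 = 4 * (k ^ 2 + k) + 1 by ring]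
    omega
  have hchar := ringChar_ne_two_of_card_mod_four hq4
  have hm₁ : 1 ≤ 2 * m ^ 2 := by omega
  have hm₂ : m ≤ 2 * m ^ 2 := by nlinarith
  have hcard : Fintype.card (Option F × Fin 2) = 4 * m ^ 2 := by
    simp only [Fintype.card_prod, Fintype.card_option, Fintype.card_fin]
    omega
  zify [hm₁] at hF
  zify [hm₂] at hsize
  have hrow := paleyII_mulVec_columnSigns_eq_or hchar hF hsize (natCast_eq_or_of_mem_pair hD₁)
    (fun j => charSum_add_charSum_eq_or hsize (hint1 j))
    (fun j => charSum_sub_charSum_eq_or hsize (hint2 j))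
  obtain ⟨H, hH, hHrow⟩ := ((isHadamard_paleyII_paleyMatrix hq4).mul_diagonal
    (columnSigns_mem_unitary (b := b) (by omega) D₀ D₁)).exists_rowSum_eq fun p => by
      simpa [mulVec, dotProduct, Matrix.mul_diagonal] using hrow p
  exact hH.exists_fin_of_card_eq hHrow hcard

/-- For `q = 2m² − 1` a prime power with `m` odd, a two-intersection-type
configuration `(b, D₀, D₁)` as in the paper yields a regular Hadamard matrix of order
`4m²` (all row sums equal to `2m`). -/
theorem stmt_17 (m : ℕ) (hm : 0 < m) (hmodd : Odd m)
    (F : Type) [Field F] [Fintype F] (hF : Fintype.card F = 2 * m ^ 2 - 1)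
    (C : Set F) (hC : C = {x : F | x ≠ 0 ∧ IsSquare x})
    (N : Set F) (hN : N = Set.univ \ (C ∪ {0}))
    (b : ℕ) (hb : b = 0 ∨ b = 1)
    (D₀ D₁ : Set F)
    (hsize : b + D₀.ncard + D₁.ncard = 2 * m ^ 2 - m)
    (hD₁ : D₁.ncard ∈ ({m ^ 2 - m, m ^ 2} : Set ℕ))
    (hint1 : ∀ j : F,
      (D₀ ∩ ((fun x => x + j) '' (C ∪ {0}))).ncard + (D₁ ∩ ((fun x => x + j) '' C)).ncard ∈
        ({m ^ 2 - m, m ^ 2} : Set ℕ))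
    (hint2 : ∀ j : F,
      b + (D₀ ∩ ((fun x => x + j) '' C)).ncard + (D₁ ∩ ((fun x => x + j) '' N)).ncard ∈
        ({m ^ 2 - m, m ^ 2} : Set ℕ)) :
    ∃ H : Matrix (Fin (4 * m ^ 2)) (Fin (4 * m ^ 2)) ℤ,
      (∀ i j, H i j = 1 ∨ H i j = -1) ∧
      H * H.transpose = ((4 * m ^ 2 : ℕ) : ℤ) • (1 : Matrix _ _ ℤ) ∧
      (∀ i, (∑ j, H i j) = 2 * (m : ℤ)) :=
  stmt_17_general m hmodd F hF C hC N hN b hb D₀ D₁ hsize hD₁ hint1 hint2
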